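/- arXiv:2604.01374 — 2 statements merged into one kernel-verified Lean document; each statement's English description precedes it below -/
import Mathlib

section
/- Let h, n, m be integers with 0 ≤ n < m and n ≥ 1. In the formal power series ring Q[[x, t]], let F = (1 + x t)^{h} · (1 - t)^{-1} · (1 - x^2 t)^{-g} for nonnegative integers h, g. Then the coefficient of x^{n+1} t^m in F minus the coefficient of x^{n+1} t^n in F equals the binomial coefficient C(h, n+1). -/
open MvPowerSeries

noncomputable def Hinv : MvPowerSeries (Fin 2) ℚ := (1 - (X 0)^2 * X 1)⁻¹

lemma constCoeff_aux : constantCoeff (1 - (X 0)^2 * X 1 : MvPowerSeries (Fin 2) ℚ) = 1 := by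
  simp

lemma Hinv_eq : Hinv = 1 + ((X 0)^2 * X 1) * Hinv := by
  have h2 : (1 - (X 0)^2 * X 1) * Hinv = 1 :=
    MvPowerSeries.mul_inv_cancel _ (by rw [constCoeff_aux]; exact one_ne_zero)
  unfold Hinv at *
  linear_combination h2

lemma mon_eq : ((X 0)^2 * X 1 : MvPowerSeries (Fin 2) ℚ)
    = monomial (Finsupp.single 0 2 + Finsupp.single 1 1) 1 := by
  rw [X_pow_eq, X_def, monomial_mul_monomial, one_mul]

lemma Hinv_support : ∀ k (e : Fin 2 →₀ ℕ), e 1 ≤ k → e 0 ≠ 2 * e 1 →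
    MvPowerSeries.coeff e Hinv = 0 := by
  intro k
  induction k with
  | zero =>
    intro e he1 he
    rw [Hinv_eq, mon_eq, map_add, coeff_monomial_mul, MvPowerSeries.coeff_one]
    rw [if_neg, if_neg, add_zero]
    · intro hle
      have := (Finsupp.le_def.mp hle) 1
      simp at this
      omega
    · rintro rfl
      simp at he
  | succ k ih =>
    intro e he1 he
    rw [Hinv_eq, mon_eq, map_add, coeff_monomial_mul, MvPowerSeries.coeff_one]
    rw [if_neg (by rintro rfl; simp at he)]
    split_ifs with hle
    · rw [zero_add, one_mul]
      have h0 := (Finsupp.le_def.mp hle) 0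
      have h1 := (Finsupp.le_def.mp hle) 1
      simp [Finsupp.single_apply] at h0 h1
      apply ih
      · simp [Finsupp.tsub_apply, Finsupp.single_apply]; omega
      · simp [Finsupp.tsub_apply, Finsupp.single_apply]; omega
    · exact add_zero 0

lemma Hg_support (g : ℕ) : ∀ (e : Fin 2 →₀ ℕ), e 0 ≠ 2 * e 1 →
    MvPowerSeries.coeff e (Hinv ^ g) = 0 := by
  induction g with
  | zero =>
    intro e he
    rw [pow_zero, MvPowerSeries.coeff_one, if_neg]
    rintro rfl; simp at he
  | succ g ih =>
    intro e he
    rw [pow_succ, MvPowerSeries.coeff_mul]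
    apply Finset.sum_eq_zero
    rintro ⟨d, e'⟩ hp
    rw [Finset.HasAntidiagonal.mem_antidiagonal] at hp
    by_cases hd : d 0 = 2 * d 1
    · have he' : e' 0 ≠ 2 * e' 1 := by
        intro h'
        apply he
        rw [← hp]; simp [Finsupp.add_apply]; omega
      rw [Hinv_support (e' 1) e' le_rfl he', mul_zero]
    · rw [ih d hd, zero_mul]

lemma Hg_const (g : ℕ) : MvPowerSeries.coeff 0 (Hinv ^ g) = 1 := by
  have : MvPowerSeries.coeff (0 : Fin 2 →₀ ℕ) (Hinv ^ g)
      = constantCoeff (Hinv ^ g) := rfl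
  rw [this, map_pow]
  unfold Hinv
  rw [MvPowerSeries.constantCoeff_inv, constCoeff_aux]
  simp

lemma XX_pow (k : ℕ) : ((X 0 * X 1 : MvPowerSeries (Fin 2) ℚ))^k
    = monomial (Finsupp.single 0 k + Finsupp.single 1 k) 1 := by
  rw [mul_pow, X_pow_eq, X_pow_eq, monomial_mul_monomial, one_mul]

lemma coeffG (h g n j : ℕ) (hj : n + 1 ≤ j) :
    MvPowerSeries.coeff (Finsupp.single 0 (n+1) + Finsupp.single 1 j)
      ((1 + X 0 * X 1 : MvPowerSeries (Fin 2) ℚ)^h * Hinv ^ g)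
    = if j = n + 1 then (h.choose (n+1) : ℚ) else 0 := by
  rw [add_comm (1 : MvPowerSeries (Fin 2) ℚ), add_pow]
  rw [Finset.sum_mul, map_sum]
  have hterm : ∀ k ∈ Finset.range (h + 1),
      MvPowerSeries.coeff (Finsupp.single 0 (n+1) + Finsupp.single 1 j)
        ((X 0 * X 1 : MvPowerSeries (Fin 2) ℚ)^k * 1^(h-k) * (h.choose k : MvPowerSeries (Fin 2) ℚ) * Hinv ^ g)
      = if j = n + 1 ∧ k = n + 1 then (h.choose (n+1) : ℚ) else 0 := by
    intro k hk
    rw [one_pow, mul_one, XX_pow]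
    have hc : ((h.choose k : ℕ) : MvPowerSeries (Fin 2) ℚ)
        = monomial 0 ((h.choose k : ℕ) : ℚ) := by
      rw [monomial_zero_eq_C_apply, map_natCast]
    rw [hc, monomial_mul_monomial, one_mul, add_zero, coeff_monomial_mul]
    split_ifs with hle hjk hjk
    · -- single ≤ target, j = n+1 and k = n+1
      obtain ⟨hj1, hk1⟩ := hjk
      subst hj1; subst hk1
      rw [tsub_self]
      rw [Hg_const, mul_one]
    · -- single ≤ target, not (j = n+1 ∧ k = n+1): show coeff of Hg is 0
      have h0 := (Finsupp.le_def.mp hle) 0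
      have h1 := (Finsupp.le_def.mp hle) 1
      simp [Finsupp.single_apply] at h0 h1
      rw [Hg_support g _ ?_, mul_zero]
      simp [Finsupp.tsub_apply, Finsupp.single_apply]
      omega
    · -- ¬ single ≤ target but j = n+1 ∧ k = n+1: contradiction
      exfalso
      obtain ⟨hj1, hk1⟩ := hjk
      subst hj1; subst hk1
      exact hle le_rfl
    · rfl
  rw [Finset.sum_congr rfl hterm]
  rw [Finset.sum_ite, Finset.sum_const_zero, add_zero]
  by_cases hcase : j = n + 1 ∧ n + 1 ≤ h
  · obtain ⟨hj1, hh⟩ := hcase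
    have : Finset.filter (fun k => j = n + 1 ∧ k = n + 1) (Finset.range (h+1))
        = {n+1} := by
      ext k
      simp [Finset.mem_filter, Finset.mem_range]
      omega
    rw [this, Finset.sum_singleton, if_pos hj1]
  · have : Finset.filter (fun k => j = n + 1 ∧ k = n + 1) (Finset.range (h+1))
        = ∅ := by
      ext k
      simp [Finset.mem_filter, Finset.mem_range]
      omega
    rw [this, Finset.sum_empty]
    split_ifs with hj1
    · rw [Nat.choose_eq_zero_of_lt (by omega), Nat.cast_zero]
    · rfl

lemma step_rel (h g n j : ℕ) (hj : n ≤ j) :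
    MvPowerSeries.coeff (Finsupp.single 0 (n+1) + Finsupp.single 1 (j+1))
      ((1 + X 0 * X 1 : MvPowerSeries (Fin 2) ℚ)^h * (1 - X 1)⁻¹ * Hinv^g)
    - MvPowerSeries.coeff (Finsupp.single 0 (n+1) + Finsupp.single 1 j)
      ((1 + X 0 * X 1 : MvPowerSeries (Fin 2) ℚ)^h * (1 - X 1)⁻¹ * Hinv^g)
    = if j + 1 = n + 1 then (h.choose (n+1) : ℚ) else 0 := by
  set F : MvPowerSeries (Fin 2) ℚ := (1 + X 0 * X 1)^h * (1 - X 1)⁻¹ * Hinv^g with hF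
  have h2 : (1 - X 1 : MvPowerSeries (Fin 2) ℚ) * (1 - X 1)⁻¹ = 1 :=
    MvPowerSeries.mul_inv_cancel _ (by simp)
  have hG : (1 - X 1) * F = (1 + X 0 * X 1 : MvPowerSeries (Fin 2) ℚ)^h * Hinv^g := by
    rw [hF]
    linear_combination ((1 + X 0 * X 1 : MvPowerSeries (Fin 2) ℚ)^h * Hinv^g) * h2
  have hXF : MvPowerSeries.coeff (Finsupp.single 0 (n+1) + Finsupp.single 1 (j+1))
      ((X 1 : MvPowerSeries (Fin 2) ℚ) * F)
      = MvPowerSeries.coeff (Finsupp.single 0 (n+1) + Finsupp.single 1 j) F := by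
    rw [X_def, coeff_monomial_mul, if_pos, one_mul]
    · have heq : (Finsupp.single (0:Fin 2) (n+1) + Finsupp.single 1 (j+1)) - Finsupp.single 1 1
          = Finsupp.single 0 (n+1) + Finsupp.single 1 j := by
        ext a
        fin_cases a <;> simp [Finsupp.tsub_apply, Finsupp.single_apply]
      rw [heq]
    · rw [Finsupp.le_def]
      intro a
      fin_cases a <;> simp [Finsupp.single_apply]
  have := congrArg (MvPowerSeries.coeff (Finsupp.single 0 (n+1) + Finsupp.single 1 (j+1))) hG
  rw [sub_mul, one_mul, map_sub, hXF, coeffG h g n (j+1) (by omega)] at this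
  rw [this]

/-- In `ℚ[[x,t]]` (with `x = X 0`, `t = X 1`), let
`F = (1 + x t)ʰ (1 - t)⁻¹ (1 - x² t)⁻ᵍ`. For `1 ≤ n < m`, the coefficient of
`x^{n+1} t^m` in `F` minus the coefficient of `x^{n+1} t^n` in `F` equals `C(h, n+1)`. -/
theorem coeff_diff_hodge (h g n m : ℕ) (hn : 1 ≤ n) (hnm : n < m) :
    MvPowerSeries.coeff
        (Finsupp.single (0 : Fin 2) (n + 1) + Finsupp.single (1 : Fin 2) m)
        ((1 + MvPowerSeries.X 0 * MvPowerSeries.X 1) ^ h *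
          ((1 - MvPowerSeries.X 1)⁻¹ : MvPowerSeries (Fin 2) ℚ) *
          ((1 - (MvPowerSeries.X 0) ^ 2 * MvPowerSeries.X 1)⁻¹) ^ g) -
      MvPowerSeries.coeff
        (Finsupp.single (0 : Fin 2) (n + 1) + Finsupp.single (1 : Fin 2) n)
        ((1 + MvPowerSeries.X 0 * MvPowerSeries.X 1) ^ h *
          ((1 - MvPowerSeries.X 1)⁻¹ : MvPowerSeries (Fin 2) ℚ) *
          ((1 - (MvPowerSeries.X 0) ^ 2 * MvPowerSeries.X 1)⁻¹) ^ g) =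
      (h.choose (n + 1) : ℚ) := by
  have key : ∀ m', n + 1 ≤ m' →
      MvPowerSeries.coeff (Finsupp.single 0 (n+1) + Finsupp.single 1 m')
        ((1 + X 0 * X 1 : MvPowerSeries (Fin 2) ℚ)^h * (1 - X 1)⁻¹ * Hinv^g)
      - MvPowerSeries.coeff (Finsupp.single 0 (n+1) + Finsupp.single 1 n)
        ((1 + X 0 * X 1 : MvPowerSeries (Fin 2) ℚ)^h * (1 - X 1)⁻¹ * Hinv^g)
      = (h.choose (n+1) : ℚ) := by
    intro m' hm'
    induction m', hm' using Nat.le_induction with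
    | base =>
      have := step_rel h g n n le_rfl
      rw [if_pos rfl] at this
      exact this
    | succ m' hm' ih =>
      have := step_rel h g n m' (by omega)
      rw [if_neg (by omega)] at this
      linarith
  exact key m hnm
end

section
/- Let h, g be nonnegative integers and let F = (1 + x t)^h (1 - t)^{-1} (1 - x^2 t)^{-g} in Q[[x, t]]. For all integers p, n, m with 0 ≤ p ≤ n ≤ m, the coefficient of x^p t^n in F equals the coefficient of x^p t^m in F. -/
open MvPowerSeries Finsupp

/-- Explicit geometric series `∑ (x²t)^j`, to be identified with `(1 - x²t)⁻¹`. -/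
noncomputable def hodgeS : MvPowerSeries (Fin 2) ℚ :=
  fun d => if d 0 = 2 * d 1 then 1 else 0

lemma coeff_hodgeS (d : Fin 2 →₀ ℕ) :
    MvPowerSeries.coeff (R := ℚ) d hodgeS = if d 0 = 2 * d 1 then 1 else 0 := rfl

lemma x2t_eq : (MvPowerSeries.X 0) ^ 2 * MvPowerSeries.X 1 =
    MvPowerSeries.monomial (R := ℚ) (Finsupp.single (0 : Fin 2) 2 + Finsupp.single 1 1) 1 := by
  rw [MvPowerSeries.X_pow_eq, MvPowerSeries.X, MvPowerSeries.monomial_mul_monomial, one_mul]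

lemma hodgeS_mul : (1 - (MvPowerSeries.X 0) ^ 2 * MvPowerSeries.X 1) * hodgeS = 1 := by
  ext d
  rw [sub_mul, one_mul, map_sub, x2t_eq, MvPowerSeries.coeff_monomial_mul,
    MvPowerSeries.coeff_one, coeff_hodgeS]
  have hle : (Finsupp.single (0 : Fin 2) 2 + Finsupp.single 1 1 ≤ d) ↔ 2 ≤ d 0 ∧ 1 ≤ d 1 := by
    rw [Finsupp.le_def]
    constructor
    · intro H; exact ⟨by simpa using H 0, by simpa using H 1⟩
    · intro H i
      fin_cases i
      · simpa using H.1
      · simpa using H.2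
  have hd0 : (d = 0) ↔ d 0 = 0 ∧ d 1 = 0 := by
    constructor
    · intro H; simp [H]
    · intro H; ext i; fin_cases i <;> simp [H.1, H.2]
  simp only [coeff_hodgeS, Finsupp.tsub_apply, Finsupp.add_apply, Finsupp.single_apply,
    hle, hd0, one_mul]
  norm_num
  split_ifs <;> first | omega | norm_num

lemma hodgeS_eq : ((1 - (MvPowerSeries.X 0) ^ 2 * MvPowerSeries.X 1)⁻¹ :
    MvPowerSeries (Fin 2) ℚ) = hodgeS := by
  have hc : MvPowerSeries.constantCoeff (σ := Fin 2) (R := ℚ)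
      (1 - (MvPowerSeries.X 0) ^ 2 * MvPowerSeries.X 1) ≠ 0 := by
    simp
  rw [MvPowerSeries.inv_eq_iff_mul_eq_one hc, mul_comm]
  exact hodgeS_mul

/-- "good" series: every monomial has `t`-degree ≤ `x`-degree. -/
def HodgeGood (f : MvPowerSeries (Fin 2) ℚ) : Prop :=
  ∀ d : Fin 2 →₀ ℕ, d 0 < d 1 → MvPowerSeries.coeff (R := ℚ) d f = 0

lemma hodgeGood_mul {f g : MvPowerSeries (Fin 2) ℚ} (hf : HodgeGood f) (hg : HodgeGood g) :
    HodgeGood (f * g) := by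
  intro d hd
  classical
  rw [MvPowerSeries.coeff_mul]
  refine Finset.sum_eq_zero fun p hp => ?_
  rw [Finset.HasAntidiagonal.mem_antidiagonal] at hp
  have h0 : p.1 0 + p.2 0 = d 0 := by rw [← hp]; simp
  have h1 : p.1 1 + p.2 1 = d 1 := by rw [← hp]; simp
  rcases (by omega : p.1 0 < p.1 1 ∨ p.2 0 < p.2 1) with h | h
  · rw [hf _ h, zero_mul]
  · rw [hg _ h, mul_zero]

lemma hodgeGood_one : HodgeGood 1 := by
  intro d hd
  rw [MvPowerSeries.coeff_one, if_neg]
  intro h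
  simp [h] at hd

lemma hodgeGood_pow {f : MvPowerSeries (Fin 2) ℚ} (hf : HodgeGood f) (k : ℕ) :
    HodgeGood (f ^ k) := by
  induction k with
  | zero => simpa using hodgeGood_one
  | succ k ih => rw [pow_succ]; exact hodgeGood_mul ih hf

lemma hodgeGood_base : HodgeGood (1 + MvPowerSeries.X 0 * MvPowerSeries.X 1 :
    MvPowerSeries (Fin 2) ℚ) := by
  intro d hd
  have hxt : (MvPowerSeries.X 0 * MvPowerSeries.X 1 : MvPowerSeries (Fin 2) ℚ) =
      MvPowerSeries.monomial (R := ℚ) (Finsupp.single (0 : Fin 2) 1 + Finsupp.single 1 1) 1 := by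
    rw [MvPowerSeries.X, MvPowerSeries.X, MvPowerSeries.monomial_mul_monomial, one_mul]
  rw [map_add, hxt, MvPowerSeries.coeff_one, MvPowerSeries.coeff_monomial, if_neg, if_neg,
    add_zero]
  · intro h
    have := congrArg (fun e : Fin 2 →₀ ℕ => (e 0, e 1)) h
    simp at this
    omega
  · intro h
    simp [h] at hd

lemma hodgeGood_S : HodgeGood hodgeS := by
  intro d hd
  rw [coeff_hodgeS, if_neg]
  omega

/-- In `ℚ[[x,t]]` (with `x = X 0`, `t = X 1`), let
`F = (1 + x t)ʰ (1 - t)⁻¹ (1 - x² t)⁻ᵍ`. For `0 ≤ p ≤ n ≤ m`, the coefficient of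
`x^p t^n` in `F` equals the coefficient of `x^p t^m` in `F`. -/
theorem coeff_hodge_stable (h g p n m : ℕ) (hpn : p ≤ n) (hnm : n ≤ m) :
    MvPowerSeries.coeff (R := ℚ)
        (Finsupp.single (0 : Fin 2) p + Finsupp.single (1 : Fin 2) n)
        ((1 + MvPowerSeries.X 0 * MvPowerSeries.X 1) ^ h *
          ((1 - MvPowerSeries.X 1)⁻¹ : MvPowerSeries (Fin 2) ℚ) *
          ((1 - (MvPowerSeries.X 0) ^ 2 * MvPowerSeries.X 1)⁻¹) ^ g) =
      MvPowerSeries.coeff (R := ℚ)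
        (Finsupp.single (0 : Fin 2) p + Finsupp.single (1 : Fin 2) m)
        ((1 + MvPowerSeries.X 0 * MvPowerSeries.X 1) ^ h *
          ((1 - MvPowerSeries.X 1)⁻¹ : MvPowerSeries (Fin 2) ℚ) *
          ((1 - (MvPowerSeries.X 0) ^ 2 * MvPowerSeries.X 1)⁻¹) ^ g) := by
  set F : MvPowerSeries (Fin 2) ℚ :=
    (1 + MvPowerSeries.X 0 * MvPowerSeries.X 1) ^ h *
      ((1 - MvPowerSeries.X 1)⁻¹ : MvPowerSeries (Fin 2) ℚ) *
      ((1 - (MvPowerSeries.X 0) ^ 2 * MvPowerSeries.X 1)⁻¹) ^ g with hF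
  set A : MvPowerSeries (Fin 2) ℚ :=
    (1 + MvPowerSeries.X 0 * MvPowerSeries.X 1) ^ h * hodgeS ^ g with hA
  have hgoodA : HodgeGood A :=
    hodgeGood_mul (hodgeGood_pow hodgeGood_base h) (hodgeGood_pow hodgeGood_S g)
  have hct : MvPowerSeries.constantCoeff (σ := Fin 2) (R := ℚ) (1 - MvPowerSeries.X 1) ≠ 0 := by simp
  have hFA : F * (1 - MvPowerSeries.X 1) = A := by
    rw [hF, hA, hodgeS_eq, mul_right_comm,
      mul_assoc ((1 + MvPowerSeries.X 0 * MvPowerSeries.X 1) ^ h),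
      MvPowerSeries.inv_mul_cancel _ hct, mul_one]
  -- the step lemma
  have hstep : ∀ k : ℕ, n ≤ k →
      MvPowerSeries.coeff (R := ℚ) (Finsupp.single (0 : Fin 2) p + Finsupp.single 1 (k + 1)) F =
      MvPowerSeries.coeff (R := ℚ) (Finsupp.single (0 : Fin 2) p + Finsupp.single 1 k) F := by
    intro k hk
    have hzero : MvPowerSeries.coeff (R := ℚ)
        (Finsupp.single (0 : Fin 2) p + Finsupp.single 1 (k + 1)) A = 0 := by
      apply hgoodA
      simp [Finsupp.single_apply]
      omega
    rw [← hFA] at hzero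
    have ht : (MvPowerSeries.X 1 : MvPowerSeries (Fin 2) ℚ) =
        MvPowerSeries.monomial (R := ℚ) (Finsupp.single (1 : Fin 2) 1) 1 := rfl
    rw [mul_sub, mul_one, map_sub, ht, MvPowerSeries.coeff_mul_monomial, if_pos] at hzero
    · have hd : (Finsupp.single (0 : Fin 2) p + Finsupp.single 1 (k + 1)) -
          Finsupp.single (1 : Fin 2) 1 =
          Finsupp.single (0 : Fin 2) p + Finsupp.single 1 k := by
        ext i
        fin_cases i <;> simp [Finsupp.single_apply]
      rw [hd, mul_one] at hzero
      linarith [hzero]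
    · rw [Finsupp.le_def]
      intro i
      fin_cases i <;> simp [Finsupp.single_apply]
  -- induction from n to m
  have : ∀ k : ℕ, n ≤ k →
      MvPowerSeries.coeff (R := ℚ) (Finsupp.single (0 : Fin 2) p + Finsupp.single 1 k) F =
      MvPowerSeries.coeff (R := ℚ) (Finsupp.single (0 : Fin 2) p + Finsupp.single 1 n) F := by
    intro k
    induction k with
    | zero =>
      intro hk
      have hn0 : n = 0 := by omega
      subst hn0; rfl
    | succ k ih =>
      intro hk
      rcases Nat.lt_or_ge n (k + 1) with hlt | hge
      · have hnk : n ≤ k := by omega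
        rw [hstep k hnk, ih hnk]
      · have : n = k + 1 := by omega
        subst this; rfl
  exact (this m hnm).symm
end
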